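/- Let (G, Γ) be a discrete Hecke pair, let R^Γ = ⋂_{g∈G} gΓg⁻¹ (a normal subgroup of G contained in Γ), and let (G_r, Γ_r) = (G/R^Γ, Γ/R^Γ) be the reduction of (G, Γ). Then the pair (G, Γ) has property (T) if and only if the pair (G_r, Γ_r) has property (T). -/

import Mathlib

/-! Since the normal core `N` of `Γ` lies in `Γ`, the coset spaces `G/Γ` and `G_r/Γ_r` are
canonically homeomorphic (both are quotients of `G` with the same fibres). A representation of
`G_r` is a representation of `G` trivial on `N`, which gives one implication. Conversely, every
`Γ`-invariant vector of a representation of `G` is `N`-invariant, so the closed subspace of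
`N`-fixed vectors, on which `G` acts through `G_r`, already contains the `Γ`-invariant almost
invariant vectors; an invariant vector of `G_r` there is one of `G`. -/

noncomputable section

/-- A pair `(𝒢, ℋ)` consisting of a topological group `𝒢` and a subgroup `ℋ` has
*property (T)* if every unitary representation of `𝒢` (a strongly continuous homomorphism
into the unitary group of a complex Hilbert space) that has `ℋ`-invariant almost
`𝒢`-invariant vectors — i.e. for each `ε > 0` and each compact `Q ⊆ 𝒢/ℋ` there is an
`ℋ`-invariant unit vector `ξ` with `‖π(g)ξ - ξ‖ < ε` for all `g` with `gℋ ∈ Q` — has a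
nonzero `𝒢`-invariant vector. -/
def HasPropertyTPair (G : Type*) [Group G] [TopologicalSpace G] (H : Subgroup G) : Prop :=
  ∀ (E : Type) (_ : NormedAddCommGroup E) (_ : InnerProductSpace ℂ E) (_ : CompleteSpace E)
    (π : G →* (E ≃ₗᵢ[ℂ] E)),
    (∀ ξ : E, Continuous fun g : G => π g ξ) →
    (∀ ε : ℝ, 0 < ε → ∀ Q : Set (G ⧸ H), IsCompact Q →
      ∃ ξ : E, ‖ξ‖ = 1 ∧ (∀ h ∈ H, π h ξ = ξ) ∧
        ∀ g : G, (QuotientGroup.mk g : G ⧸ H) ∈ Q → ‖π g ξ - ξ‖ < ε) →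
    ∃ ξ : E, ξ ≠ 0 ∧ ∀ g : G, π g ξ = ξ

open QuotientGroup

section FixedSubspace

variable {G E : Type*} [Group G] [NormedAddCommGroup E] [InnerProductSpace ℂ E]
  (π : G →* (E ≃ₗᵢ[ℂ] E)) (N : Subgroup G)

def fixedSubspace : Submodule ℂ E where
  carrier := {ξ | ∀ n ∈ N, π n ξ = ξ}
  add_mem' ha hb n hn := by simp [ha n hn, hb n hn]
  zero_mem' _ _ := map_zero _
  smul_mem' c _ hξ n hn := by simp [hξ n hn]

variable {π N}

theorem mem_fixedSubspace {ξ : E} : ξ ∈ fixedSubspace π N ↔ ∀ n ∈ N, π n ξ = ξ := Iff.rfl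

variable (π N)

theorem isClosed_fixedSubspace : IsClosed (fixedSubspace π N : Set E) := by
  have : (fixedSubspace π N : Set E) = ⋂ n ∈ N, {ξ | π n ξ = ξ} := by ext; simp [mem_fixedSubspace]
  rw [this]
  exact isClosed_biInter fun n _ => isClosed_eq (π n).continuous continuous_id

theorem apply_mem_fixedSubspace [N.Normal] (g : G) {ξ : E} (hξ : ξ ∈ fixedSubspace π N) :
    π g ξ ∈ fixedSubspace π N := fun n hn => by
  have hconj : g⁻¹ * n * g ∈ N := ‹N.Normal›.conj_mem' n hn g
  calc π n (π g ξ) = π g (π (g⁻¹ * n * g) ξ) := by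
        simp [LinearIsometryEquiv.coe_mul, LinearIsometryEquiv.coe_inv]
    _ = π g ξ := by rw [hξ _ hconj]

def restrictFixedSubspace [N.Normal] : G →* (fixedSubspace π N ≃ₗᵢ[ℂ] fixedSubspace π N) where
  toFun g :=
    { toFun ξ := ⟨π g ξ, apply_mem_fixedSubspace π N g ξ.2⟩
      invFun ξ := ⟨π g⁻¹ ξ, apply_mem_fixedSubspace π N g⁻¹ ξ.2⟩
      left_inv ξ := Subtype.ext <| by simp [map_inv]
      right_inv ξ := Subtype.ext <| by simp [map_inv]
      map_add' ξ η := Subtype.ext <| map_add _ _ _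
      map_smul' c ξ := Subtype.ext <| map_smul _ _ _
      norm_map' ξ := (π g).norm_map ξ }
  map_one' := by ext; simp
  map_mul' g h := by ext; simp

def quotientRep [N.Normal] : G ⧸ N →* (fixedSubspace π N ≃ₗᵢ[ℂ] fixedSubspace π N) :=
  lift N (restrictFixedSubspace π N) fun n hn => by ext ξ; exact ξ.2 n hn

end FixedSubspace

section Reduction

variable {G : Type*} [Group G] {N Γ : Subgroup G} [N.Normal]

theorem mk_mk_eq_mk_mk_iff (hN : N ≤ Γ) {a b : G} :
    (((a : G ⧸ N) : (G ⧸ N) ⧸ Γ.map (mk' N)) = ((b : G ⧸ N) : (G ⧸ N) ⧸ Γ.map (mk' N))) ↔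
      (a : G ⧸ Γ) = b := by
  rw [QuotientGroup.eq, QuotientGroup.eq, ← mk_inv, ← mk_mul, ← mk'_apply, ← Subgroup.mem_comap,
    comap_map_mk', sup_eq_right.mpr hN]

variable (N Γ) in
def reductionMap (hN : N ≤ Γ) : G ⧸ Γ → (G ⧸ N) ⧸ Γ.map (mk' N) :=
  Quotient.lift (fun g : G => ((g : G ⧸ N) : (G ⧸ N) ⧸ Γ.map (mk' N)))
    fun _ _ h => (mk_mk_eq_mk_mk_iff hN).2 (Quotient.sound h)

theorem reductionMap_injective (hN : N ≤ Γ) : Function.Injective (reductionMap N Γ hN) := by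
  rintro ⟨a⟩ ⟨b⟩ h
  exact (mk_mk_eq_mk_mk_iff hN).1 h

theorem isHomeomorph_reductionMap [TopologicalSpace G] (hN : N ≤ Γ) :
    IsHomeomorph (reductionMap N Γ hN) :=
  isHomeomorph_iff_isQuotientMap_injective.2
    ⟨(isQuotientMap_mk Γ).of_comp_isQuotientMap ((isQuotientMap_mk _).comp (isQuotientMap_mk N)),
      reductionMap_injective hN⟩

end Reduction

section PropertyT

variable {G E : Type*} [Group G] [TopologicalSpace G] [NormedAddCommGroup E]
  [InnerProductSpace ℂ E] {N Γ : Subgroup G} [N.Normal]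

def HasAlmostInvariantVectors (H : Subgroup G) (π : G →* (E ≃ₗᵢ[ℂ] E)) : Prop :=
  ∀ ε : ℝ, 0 < ε → ∀ Q : Set (G ⧸ H), IsCompact Q →
    ∃ ξ : E, ‖ξ‖ = 1 ∧ (∀ h ∈ H, π h ξ = ξ) ∧ ∀ g : G, (g : G ⧸ H) ∈ Q → ‖π g ξ - ξ‖ < ε

theorem HasAlmostInvariantVectors.comp_mk' (hN : N ≤ Γ) {π : G ⧸ N →* (E ≃ₗᵢ[ℂ] E)}
    (h : HasAlmostInvariantVectors (Γ.map (mk' N)) π) :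
    HasAlmostInvariantVectors Γ (π.comp (mk' N)) := by
  intro ε hε Q hQ
  obtain ⟨ξ, hnorm, hΓ, hQξ⟩ :=
    h ε hε (reductionMap N Γ hN '' Q) (hQ.image (isHomeomorph_reductionMap hN).continuous)
  exact ⟨ξ, hnorm, fun γ hγ => hΓ γ ⟨γ, hγ, rfl⟩, fun g hg => hQξ g ⟨g, hg, rfl⟩⟩

theorem HasAlmostInvariantVectors.quotientRep (hN : N ≤ Γ) {π : G →* (E ≃ₗᵢ[ℂ] E)}
    (h : HasAlmostInvariantVectors Γ π) :
    HasAlmostInvariantVectors (Γ.map (mk' N)) (quotientRep π N) := by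
  intro ε hε Q hQ
  obtain ⟨ξ, hnorm, hΓ, hQξ⟩ := h ε hε (reductionMap N Γ hN ⁻¹' Q)
    ((isHomeomorph_reductionMap hN).homeomorph.isCompact_preimage.2 hQ)
  refine ⟨⟨ξ, fun n hn => hΓ n (hN hn)⟩, hnorm, ?_, fun y hy => ?_⟩
  · rintro _ ⟨γ, hγ, rfl⟩
    exact Subtype.ext (hΓ γ hγ)
  · induction y using QuotientGroup.induction_on with
    | H g => exact hQξ g hy

theorem continuous_quotientRep_apply {π : G →* (E ≃ₗᵢ[ℂ] E)}
    (hπ : ∀ ξ : E, Continuous fun g : G => π g ξ) (ξ : fixedSubspace π N) :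
    Continuous fun y : G ⧸ N => quotientRep π N y ξ :=
  (isQuotientMap_mk N).continuous_iff.2 ((hπ ξ).subtype_mk _)

theorem HasPropertyTPair.quotient (hN : N ≤ Γ) (hT : HasPropertyTPair G Γ) :
    HasPropertyTPair (G ⧸ N) (Γ.map (mk' N)) := by
  intro E _ _ _ π hπ (hπΓ : HasAlmostInvariantVectors _ π)
  obtain ⟨ξ, hξ, hfix⟩ :=
    hT E _ _ ‹_› (π.comp (mk' N)) (fun ξ => (hπ ξ).comp continuous_mk) (hπΓ.comp_mk' hN)
  exact ⟨ξ, hξ, fun y => QuotientGroup.induction_on y hfix⟩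

theorem HasPropertyTPair.of_quotient (hN : N ≤ Γ)
    (hT : HasPropertyTPair (G ⧸ N) (Γ.map (mk' N))) : HasPropertyTPair G Γ := by
  intro E _ _ _ π hπ (hπΓ : HasAlmostInvariantVectors Γ π)
  have : CompleteSpace (fixedSubspace π N) := (isClosed_fixedSubspace π N).completeSpace_coe
  obtain ⟨ξ, hξ, hfix⟩ := hT _ _ _ ‹_› (quotientRep π N) (continuous_quotientRep_apply hπ)
    (hπΓ.quotientRep hN)
  exact ⟨ξ, by simpa using hξ, fun g => congrArg Subtype.val (hfix g)⟩

end PropertyT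

theorem heckePair_T_iff_reduction_T_general {G : Type*} [Group G] [TopologicalSpace G]
    (Γ : Subgroup G) :
    HasPropertyTPair G Γ ↔
      HasPropertyTPair (G ⧸ Γ.normalCore)
        (Γ.map (QuotientGroup.mk' Γ.normalCore)) :=
  ⟨.quotient Γ.normalCore_le, .of_quotient Γ.normalCore_le⟩

/-- Let `(G, Γ)` be a discrete Hecke pair (every double coset `ΓgΓ`
contains finitely many left cosets), let `R^Γ = ⋂_{g ∈ G} gΓg⁻¹` be the normal core of `Γ`,
and let `(G_r, Γ_r) = (G/R^Γ, Γ/R^Γ)` be the reduction of `(G, Γ)`.  Then `(G, Γ)` has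
property (T) if and only if `(G_r, Γ_r)` has property (T). -/
theorem heckePair_T_iff_reduction_T {G : Type*} [Group G] [TopologicalSpace G]
    [DiscreteTopology G] (Γ : Subgroup G)
    (hHecke : ∀ g : G,
      {x : G ⧸ Γ | ∃ γ ∈ Γ, x = QuotientGroup.mk (γ * g)}.Finite) :
    HasPropertyTPair G Γ ↔
      HasPropertyTPair (G ⧸ Γ.normalCore)
        (Γ.map (QuotientGroup.mk' Γ.normalCore)) :=
  heckePair_T_iff_reduction_T_general Γ

end
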